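/- arXiv:1609.03250 — 4 statements merged into one kernel-verified Lean document; each statement's English description precedes it below -/
import Mathlib

section
/- Let Z_1,...,Z_n be i.i.d. random variables with 0 ≤ Z_i ≤ M, mean μ, and empirical mean μ̂ = (1/n)∑Z_i. For any ν > 0 and 0 < α < 1, P( |μ̂ - μ| / (ν + μ̂ + μ) > α ) < 2·exp(-α²νn/M). -/
/-!
Chernoff's method. By convexity of `exp`, a variable with values in `[0, M]` and mean `μ` has
`E[e^{tZ}] ≤ exp (μ / M * (e^{tM} - 1))`, the moment generating function of `M` times a Poisson
variable. Optimizing `t`, each tail `P(S ≥ n s)` (for `s ≥ μ`) or `P(S ≤ n s)` (for `s ≤ μ`) of the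
sum `S` is at most `exp (-(n / M) * (s log (s / μ) - s + μ)) ≤ exp (-(n / M) * (√s - √μ)²)`.
On each side of `μ` there is one threshold `s` at relative deviation exactly `α`, and there
`(√s - √μ)² = α² (ν + s + μ)² / (√s + √μ)² > α² ν`, since
`(ν + s + μ)² ≥ 4 ν (s + μ) > 2 ν (s + μ) ≥ ν (√s + √μ)²`.
-/

open MeasureTheory ProbabilityTheory Real Set

theorem Real.sq_sqrt_sub_sqrt_le_mul_log_div {s μ : ℝ} (hs : 0 < s) (hμ : 0 < μ) :
    (√s - √μ) ^ 2 ≤ s * log (s / μ) - s + μ := by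
  have ha := sqrt_pos.2 hs
  have hb := sqrt_pos.2 hμ
  have hlog : 2 * (1 - √μ / √s) ≤ log (s / μ) := by
    have h := one_sub_inv_le_log_of_pos (div_pos ha hb)
    rw [inv_div] at h
    calc 2 * (1 - √μ / √s) ≤ 2 * log (√s / √μ) := by linarith
      _ = log (s / μ) := by
        rw [← sqrt_div hs.le, log_sqrt (div_pos hs hμ).le]; ring
  have hmul : s * (√μ / √s) = √s * √μ := by
    field_simp
    rw [sq_sqrt hs.le]
  nlinarith [mul_le_mul_of_nonneg_left hlog hs.le, sq_sqrt hs.le, sq_sqrt hμ.le]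

theorem Real.mul_sq_lt_sq_sqrt_sub_sqrt {s μ ν α : ℝ} (hs : 0 ≤ s) (hμ : 0 ≤ μ) (hν : 0 < ν)
    (hα : 0 < α) (h : α * (ν + s + μ) ≤ |s - μ|) : α ^ 2 * ν < (√s - √μ) ^ 2 := by
  obtain ⟨a, ha, rfl⟩ : ∃ a, 0 ≤ a ∧ s = a ^ 2 := ⟨√s, sqrt_nonneg _, (sq_sqrt hs).symm⟩
  obtain ⟨b, hb, rfl⟩ : ∃ b, 0 ≤ b ∧ μ = b ^ 2 := ⟨√μ, sqrt_nonneg _, (sq_sqrt hμ).symm⟩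
  rw [sqrt_sq ha, sqrt_sq hb]
  have hab : 0 < a + b := by
    by_contra! hab
    obtain rfl : a = 0 := by linarith
    obtain rfl : b = 0 := by linarith
    norm_num at h
    nlinarith
  have hsq : (α * (ν + a ^ 2 + b ^ 2)) ^ 2 ≤ (a - b) ^ 2 * (a + b) ^ 2 := by
    rw [← mul_pow, ← sq_abs ((a - b) * (a + b)), ← sq_abs (α * _)]
    refine pow_le_pow_left₀ (abs_nonneg _) ?_ 2
    rw [abs_of_nonneg (by positivity)]
    rwa [show (a - b) * (a + b) = a ^ 2 - b ^ 2 by ring]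
  have hν_lt : ν * (a + b) ^ 2 < (ν + a ^ 2 + b ^ 2) ^ 2 := by
    nlinarith [sq_nonneg (a - b), sq_nonneg (ν - a ^ 2 - b ^ 2)]
  have key : α ^ 2 * ν * (a + b) ^ 2 < (a - b) ^ 2 * (a + b) ^ 2 := by
    nlinarith [pow_pos hα 2]
  exact lt_of_mul_lt_mul_right key (sq_nonneg _)

theorem Real.exp_neg_mul_sq_sqrt_sub_sqrt_lt {s μ ν α c : ℝ} (hc : 0 < c) (hs : 0 ≤ s)
    (hμ : 0 ≤ μ) (hν : 0 < ν) (hα : 0 < α) (h : α * (ν + s + μ) ≤ |s - μ|) :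
    exp (-c * (√s - √μ) ^ 2) < exp (-α ^ 2 * ν * c) := by
  rw [exp_lt_exp, neg_mul, neg_mul, neg_mul, neg_lt_neg_iff, mul_comm c]
  exact mul_lt_mul_of_pos_right (mul_sq_lt_sq_sqrt_sub_sqrt hs hμ hν hα h) hc

theorem Real.exp_mul_le_one_add_div_mul {x M : ℝ} (hM : 0 < M) (hx : x ∈ Icc 0 M) (t : ℝ) :
    exp (t * x) ≤ 1 + x / M * (exp (t * M) - 1) := by
  have h := convexOn_exp.2 (mem_univ 0) (mem_univ (t * M)) (sub_nonneg.2 ((div_le_one hM).2 hx.2))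
    (div_nonneg hx.1 hM.le) (sub_add_cancel 1 _)
  have harg : (1 - x / M) • (0 : ℝ) + (x / M) • (t * M) = t * x := by
    simp only [smul_eq_mul]; field_simp; ring
  rw [harg, exp_zero] at h
  simp only [smul_eq_mul] at h
  linarith

namespace ProbabilityTheory

variable {Ω : Type*} {m : MeasurableSpace Ω} {P : Measure Ω} [IsProbabilityMeasure P] {M : ℝ}

theorem mgf_le_exp_integral_of_mem_Icc {X : Ω → ℝ} (hM : 0 < M) (hX : AEMeasurable X P)
    (hXM : ∀ᵐ ω ∂P, X ω ∈ Icc 0 M) (t : ℝ) :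
    mgf X P t ≤ exp (P[X] / M * (exp (t * M) - 1)) := by
  have hXint : Integrable X P := .of_mem_Icc 0 M hX hXM
  calc mgf X P t ≤ ∫ ω, (1 + X ω / M * (exp (t * M) - 1)) ∂P :=
        integral_mono_ae (integrable_exp_mul_of_mem_Icc hX hXM)
          ((integrable_const 1).add ((hXint.div_const M).mul_const _))
          (hXM.mono fun ω hω => exp_mul_le_one_add_div_mul hM hω t)
    _ = P[X] / M * (exp (t * M) - 1) + 1 := by
        rw [integral_add (integrable_const 1) ((hXint.div_const M).mul_const _),
          integral_mul_const, integral_div]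
        simp only [integral_const, probReal_univ, smul_eq_mul, one_mul]
        ring
    _ ≤ exp (P[X] / M * (exp (t * M) - 1)) := add_one_le_exp _

variable {ι : Type*} [Fintype ι] {Z : ι → Ω → ℝ} {μ s : ℝ}

theorem iIndepFun.mgf_sum_le_exp (hindep : iIndepFun Z P) (hmeas : ∀ i, Measurable (Z i))
    (hM : 0 < M) (hZ : ∀ i, ∀ᵐ ω ∂P, Z i ω ∈ Icc 0 M) (hμ : ∀ i, P[Z i] = μ) (t : ℝ) :
    mgf (∑ i, Z i) P t ≤ exp (Fintype.card ι * (μ / M * (exp (t * M) - 1))) := by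
  rw [hindep.mgf_sum hmeas Finset.univ, exp_nat_mul, ← Finset.card_univ, ← Finset.prod_const]
  refine Finset.prod_le_prod (fun i _ => mgf_nonneg) fun i _ => ?_
  simpa only [hμ i] using mgf_le_exp_integral_of_mem_Icc hM (hmeas i).aemeasurable (hZ i) t

theorem iIndepFun.exp_mul_mgf_sum_le (hindep : iIndepFun Z P) (hmeas : ∀ i, Measurable (Z i))
    (hM : 0 < M) (hZ : ∀ i, ∀ᵐ ω ∂P, Z i ω ∈ Icc 0 M) (hμ : ∀ i, P[Z i] = μ)
    (hμ0 : 0 < μ) (hs : 0 < s) :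
    exp (-(log (s / μ) / M) * (Fintype.card ι * s)) * mgf (∑ i, Z i) P (log (s / μ) / M)
      ≤ exp (-(Fintype.card ι / M) * (√s - √μ) ^ 2) := by
  set t := log (s / μ) / M
  have htM : exp (t * M) = s / μ := by
    rw [div_mul_cancel₀ _ hM.ne', exp_log (div_pos hs hμ0)]
  calc exp (-t * (Fintype.card ι * s)) * mgf (∑ i, Z i) P t
      ≤ exp (-t * (Fintype.card ι * s)) * exp (Fintype.card ι * (μ / M * (exp (t * M) - 1))) :=
        mul_le_mul_of_nonneg_left (hindep.mgf_sum_le_exp hmeas hM hZ hμ t) (exp_pos _).le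
    _ = exp (-(Fintype.card ι / M) * (s * log (s / μ) - s + μ)) := by
        rw [← exp_add, htM]
        congr 1
        simp only [t]
        field_simp
        ring
    _ ≤ exp (-(Fintype.card ι / M) * (√s - √μ) ^ 2) :=
        exp_le_exp.2 (mul_le_mul_of_nonpos_left (sq_sqrt_sub_sqrt_le_mul_log_div hs hμ0)
          (neg_nonpos.2 (by positivity)))

theorem iIndepFun.measureReal_le_sum_le (hindep : iIndepFun Z P) (hmeas : ∀ i, Measurable (Z i))
    (hM : 0 < M) (hZ : ∀ i, ∀ᵐ ω ∂P, Z i ω ∈ Icc 0 M) (hμ : ∀ i, P[Z i] = μ)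
    (hμ0 : 0 ≤ μ) (hs : 0 < s) (hμs : μ ≤ s) :
    P.real {ω | Fintype.card ι * s ≤ ∑ i, Z i ω} ≤ exp (-(Fintype.card ι / M) * (√s - √μ) ^ 2) := by
  have hint (t : ℝ) : Integrable (fun ω => exp (t * (∑ i, Z i) ω)) P :=
    hindep.integrable_exp_mul_sum hmeas fun i _ =>
      integrable_exp_mul_of_mem_Icc (hmeas i).aemeasurable (hZ i)
  simp_rw [← Finset.sum_apply]
  rcases hμ0.eq_or_lt with rfl | hμ0
  · -- `log (s / μ)` is junk at `μ = 0`, but there any exponent `t > 0` does, e.g. `1 / M`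
    calc P.real {ω | Fintype.card ι * s ≤ (∑ i, Z i) ω}
        ≤ exp (-(1 / M) * (Fintype.card ι * s)) * mgf (∑ i, Z i) P (1 / M) :=
          measure_ge_le_exp_mul_mgf _ (by positivity) (hint _)
      _ ≤ exp (-(1 / M) * (Fintype.card ι * s))
            * exp (Fintype.card ι * (0 / M * (exp (1 / M * M) - 1))) :=
          mul_le_mul_of_nonneg_left (hindep.mgf_sum_le_exp hmeas hM hZ hμ _) (exp_pos _).le
      _ = exp (-(Fintype.card ι / M) * (√s - √0) ^ 2) := by
          rw [← exp_add, sqrt_zero, sub_zero, sq_sqrt hs.le]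
          congr 1
          ring
  · calc P.real {ω | Fintype.card ι * s ≤ (∑ i, Z i) ω}
        ≤ exp (-(log (s / μ) / M) * (Fintype.card ι * s)) * mgf (∑ i, Z i) P (log (s / μ) / M) :=
          measure_ge_le_exp_mul_mgf _
            (div_nonneg (log_nonneg ((one_le_div hμ0).2 hμs)) hM.le) (hint _)
      _ ≤ _ := hindep.exp_mul_mgf_sum_le hmeas hM hZ hμ hμ0 hs

theorem iIndepFun.measureReal_sum_le_le (hindep : iIndepFun Z P) (hmeas : ∀ i, Measurable (Z i))
    (hM : 0 < M) (hZ : ∀ i, ∀ᵐ ω ∂P, Z i ω ∈ Icc 0 M) (hμ : ∀ i, P[Z i] = μ)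
    (hs : 0 < s) (hsμ : s ≤ μ) :
    P.real {ω | ∑ i, Z i ω ≤ Fintype.card ι * s} ≤ exp (-(Fintype.card ι / M) * (√s - √μ) ^ 2) := by
  have hμ0 : 0 < μ := hs.trans_le hsμ
  simp_rw [← Finset.sum_apply]
  calc P.real {ω | (∑ i, Z i) ω ≤ Fintype.card ι * s}
      ≤ exp (-(log (s / μ) / M) * (Fintype.card ι * s)) * mgf (∑ i, Z i) P (log (s / μ) / M) :=
        measure_le_le_exp_mul_mgf _
          (div_nonpos_of_nonpos_of_nonneg (log_nonpos (div_pos hs hμ0).le ((div_le_one hμ0).2 hsμ))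
            hM.le)
          (hindep.integrable_exp_mul_sum hmeas fun i _ =>
            integrable_exp_mul_of_mem_Icc (hmeas i).aemeasurable (hZ i))
    _ ≤ _ := hindep.exp_mul_mgf_sum_le hmeas hM hZ hμ hμ0 hs

variable [Nonempty ι] {ν α : ℝ}

theorem iIndepFun.measureReal_upper_relDev_lt (hindep : iIndepFun Z P)
    (hmeas : ∀ i, Measurable (Z i)) (hM : 0 < M) (hZ : ∀ i, ∀ᵐ ω ∂P, Z i ω ∈ Icc 0 M)
    (hμ : ∀ i, P[Z i] = μ) (hν : 0 < ν) (hα : 0 < α) (hα1 : α < 1) :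
    P.real {ω | α * (ν + (∑ i, Z i ω) / Fintype.card ι + μ) < (∑ i, Z i ω) / Fintype.card ι - μ}
      < exp (-α ^ 2 * ν * Fintype.card ι / M) := by
  have hn : (0 : ℝ) < Fintype.card ι := by exact_mod_cast Fintype.card_pos
  have hμ0 : 0 ≤ μ :=
    hμ (Classical.arbitrary ι) ▸ integral_nonneg_of_ae ((hZ _).mono fun ω h => h.1)
  set u := ((1 + α) * μ + α * ν) / (1 - α) with hu
  have hu0 : 0 < u := div_pos (by positivity) (sub_pos.2 hα1)
  have hu_dev : α * (ν + u + μ) = u - μ := by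
    rw [hu]; field_simp [(sub_pos.2 hα1).ne']; ring
  have hsub : {ω | α * (ν + (∑ i, Z i ω) / Fintype.card ι + μ) < (∑ i, Z i ω) / Fintype.card ι - μ}
      ⊆ {ω | Fintype.card ι * u ≤ ∑ i, Z i ω} := by
    refine ofPred_subset_ofPred.2 fun ω hω => ?_
    rw [← le_div_iff₀' hn, hu, div_le_iff₀ (sub_pos.2 hα1)]
    linarith
  calc _ ≤ P.real {ω | Fintype.card ι * u ≤ ∑ i, Z i ω} := measureReal_mono hsub
    _ ≤ exp (-(Fintype.card ι / M) * (√u - √μ) ^ 2) :=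
        hindep.measureReal_le_sum_le hmeas hM hZ hμ hμ0 hu0 (by nlinarith)
    _ < exp (-α ^ 2 * ν * Fintype.card ι / M) := by
        rw [mul_div_assoc]
        exact exp_neg_mul_sq_sqrt_sub_sqrt_lt (by positivity) hu0.le hμ0 hν hα
          (hu_dev.trans_le (le_abs_self _))

theorem iIndepFun.measureReal_lower_relDev_lt (hindep : iIndepFun Z P)
    (hmeas : ∀ i, Measurable (Z i)) (hM : 0 < M) (hZ : ∀ i, ∀ᵐ ω ∂P, Z i ω ∈ Icc 0 M)
    (hμ : ∀ i, P[Z i] = μ) (hν : 0 < ν) (hα : 0 < α) :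
    P.real {ω | α * (ν + (∑ i, Z i ω) / Fintype.card ι + μ) < μ - (∑ i, Z i ω) / Fintype.card ι}
      < exp (-α ^ 2 * ν * Fintype.card ι / M) := by
  have hn : (0 : ℝ) < Fintype.card ι := by exact_mod_cast Fintype.card_pos
  have hμ0 : 0 ≤ μ :=
    hμ (Classical.arbitrary ι) ▸ integral_nonneg_of_ae ((hZ _).mono fun ω h => h.1)
  set l := ((1 - α) * μ - α * ν) / (1 + α) with hl
  have hl_dev : α * (ν + l + μ) = μ - l := by
    rw [hl]; field_simp; ring
  have hsub : {ω | α * (ν + (∑ i, Z i ω) / Fintype.card ι + μ) < μ - (∑ i, Z i ω) / Fintype.card ι}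
      ⊆ {ω | ∑ i, Z i ω < Fintype.card ι * l} := by
    refine ofPred_subset_ofPred.2 fun ω hω => ?_
    rw [← div_lt_iff₀' hn, hl, lt_div_iff₀ (by positivity)]
    linarith
  rcases le_or_gt l 0 with hl0 | hl0
  · have hsum : ∀ᵐ ω ∂P, 0 ≤ ∑ i, Z i ω := by
      filter_upwards [ae_all_iff.2 hZ] with ω h using Finset.sum_nonneg fun i _ => (h i).1
    have hnull : P {ω | ∑ i, Z i ω < Fintype.card ι * l} = 0 :=
      measure_mono_null (ofPred_subset_ofPred.2 fun ω h => not_le.2 (h.trans_le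
        (mul_nonpos_of_nonneg_of_nonpos hn.le hl0))) (ae_iff.1 hsum)
    calc _ ≤ P.real {ω | ∑ i, Z i ω < Fintype.card ι * l} := measureReal_mono hsub
      _ = 0 := by rw [measureReal_def, hnull, ENNReal.toReal_zero]
      _ < _ := exp_pos _
  · have hlμ : l < μ := by
      have := mul_pos hα (show 0 < ν + l + μ by positivity)
      linarith
    calc _ ≤ P.real {ω | ∑ i, Z i ω ≤ Fintype.card ι * l} :=
          measureReal_mono (hsub.trans (ofPred_subset_ofPred.2 fun ω h => h.le))
      _ ≤ exp (-(Fintype.card ι / M) * (√l - √μ) ^ 2) :=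
          hindep.measureReal_sum_le_le hmeas hM hZ hμ hl0 hlμ.le
      _ < exp (-α ^ 2 * ν * Fintype.card ι / M) := by
          rw [mul_div_assoc]
          exact exp_neg_mul_sq_sqrt_sub_sqrt_lt (by positivity) hl0.le hμ0 hν hα
            (hl_dev.trans_le (abs_sub_comm l μ ▸ le_abs_self _))

end ProbabilityTheory

theorem haussler_bound_general
    {Ω : Type*} [MeasureSpace Ω] [IsProbabilityMeasure (ℙ : Measure Ω)]
    (n : ℕ) (hn : 0 < n) (M : ℝ) (hM : 0 < M)
    (Z : Fin n → Ω → ℝ)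
    (hmeas : ∀ i, Measurable (Z i))
    (hbdd : ∀ i, ∀ ω, 0 ≤ Z i ω ∧ Z i ω ≤ M)
    (hindep : iIndepFun Z ℙ)
    (μ : ℝ) (hμ : ∀ i, μ = ∫ ω, Z i ω)
    (ν α : ℝ) (hν : 0 < ν) (hα : 0 < α) (hα1 : α < 1) :
    (ℙ {ω | α < |(∑ i, Z i ω) / n - μ| / (ν + (∑ i, Z i ω) / n + μ)}).toReal
      < 2 * Real.exp (-α ^ 2 * ν * n / M) := by
  have : Nonempty (Fin n) := ⟨⟨0, hn⟩⟩
  have hZ (i : Fin n) : ∀ᵐ ω ∂ℙ, Z i ω ∈ Set.Icc 0 M := ae_of_all _ (hbdd i)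
  have hμ' (i : Fin n) : ℙ[Z i] = μ := (hμ i).symm
  have hupper := hindep.measureReal_upper_relDev_lt hmeas hM hZ hμ' hν hα hα1
  have hlower := hindep.measureReal_lower_relDev_lt hmeas hM hZ hμ' hν hα
  simp only [Fintype.card_fin] at hupper hlower
  have hsplit : {ω | α < |(∑ i, Z i ω) / n - μ| / (ν + (∑ i, Z i ω) / n + μ)}
      ⊆ {ω | α * (ν + (∑ i, Z i ω) / n + μ) < (∑ i, Z i ω) / n - μ}
        ∪ {ω | α * (ν + (∑ i, Z i ω) / n + μ) < μ - (∑ i, Z i ω) / n} := by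
    intro ω (hω : α < _ / _)
    have hD : 0 < ν + (∑ i, Z i ω) / n + μ := by
      by_contra! hD
      exact (hα.trans hω).not_ge (div_nonpos_of_nonneg_of_nonpos (abs_nonneg _) hD)
    rw [lt_div_iff₀ hD, lt_abs, neg_sub] at hω
    exact hω
  exact (measureReal_mono hsplit).trans_lt ((measureReal_union_le _ _).trans_lt (by linarith))

/-- Haussler's relative-deviation bound: for i.i.d. `Z₁,…,Zₙ` with `0 ≤ Zᵢ ≤ M`,
mean `μ` and empirical mean `μ̂`, and any `ν > 0`, `0 < α < 1`,
`P(|μ̂ - μ|/(ν + μ̂ + μ) > α) < 2·exp(-α²·ν·n/M)`. -/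
theorem haussler_bound
    {Ω : Type*} [MeasureSpace Ω] [IsProbabilityMeasure (ℙ : Measure Ω)]
    (n : ℕ) (hn : 0 < n) (M : ℝ) (hM : 0 < M)
    (Z : Fin n → Ω → ℝ)
    (hmeas : ∀ i, Measurable (Z i))
    (hbdd : ∀ i, ∀ ω, 0 ≤ Z i ω ∧ Z i ω ≤ M)
    (hindep : iIndepFun Z ℙ)
    (hident : ∀ i j, IdentDistrib (Z i) (Z j) ℙ ℙ)
    (μ : ℝ) (hμ : ∀ i, μ = ∫ ω, Z i ω)
    (ν α : ℝ) (hν : 0 < ν) (hα : 0 < α) (hα1 : α < 1) :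
    (ℙ {ω | α < |(∑ i, Z i ω) / n - μ| / (ν + (∑ i, Z i ω) / n + μ)}).toReal
      < 2 * Real.exp (-α ^ 2 * ν * n / M) :=
  haussler_bound_general n hn M hM Z hmeas hbdd hindep μ hμ ν α hν hα hα1
end

section
/- Let Z_1,...,Z_n be i.i.d. random variables with 0 ≤ Z_i ≤ M, mean μ, and empirical mean μ̂. For any ν > 0 and 0 < α < 1, P( μ < ((1-α)/(1+α))·μ̂ - (α/(1+α))·ν ) < 2·exp(-α²νn/M). -/
open MeasureTheory ProbabilityTheory Real Set

/-!
Chernoff's bound with parameter `α / M`. On `[0, M]` the exponential lies below its chord,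
so each moment generating function is at most `exp ((exp α - 1) / M * μ)`, and independence
multiplies these bounds. The event is `n a ≤ ∑ Zᵢ` for `a = ((1 + α) μ + α ν) / (1 - α)`,
and `(1 - α) exp α ≤ 1` (from `1 - α ≤ exp (-α)`) brings the exponent down to `-α² ν n / M`.
-/

theorem exp_mul_le_one_add_mul_of_mem_Icc {t M z : ℝ} (hM : 0 < M) (hz : z ∈ Icc 0 M) :
    exp (t * z) ≤ 1 + (exp (t * M) - 1) / M * z := by
  have hθ₀ : 0 ≤ z / M := div_nonneg hz.1 hM.le
  have hθ₁ : z / M ≤ 1 := (div_le_one hM).2 hz.2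
  have hchord := convexOn_exp.2 (mem_univ 0) (mem_univ (t * M)) (sub_nonneg.2 hθ₁) hθ₀
    (sub_add_cancel 1 _)
  have hz_eq : z / M * (t * M) = t * z := by field_simp
  simp only [smul_eq_mul, mul_zero, zero_add, exp_zero, hz_eq] at hchord
  calc exp (t * z) ≤ (1 - z / M) * 1 + z / M * exp (t * M) := hchord
    _ = 1 + (exp (t * M) - 1) / M * z := by field_simp; ring

section

variable {Ω : Type*} [MeasurableSpace Ω] {P : Measure Ω} [IsProbabilityMeasure P] {M : ℝ}

theorem mgf_le_exp_mul_integral_of_mem_Icc {X : Ω → ℝ} (hM : 0 < M) (hX : AEMeasurable X P)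
    (hbdd : ∀ᵐ ω ∂P, X ω ∈ Icc 0 M) (t : ℝ) :
    mgf X P t ≤ exp ((exp (t * M) - 1) / M * P[X]) := by
  have hint : Integrable X P := Integrable.of_mem_Icc 0 M hX hbdd
  calc mgf X P t ≤ P[fun ω => 1 + (exp (t * M) - 1) / M * X ω] :=
        integral_mono_ae (integrable_exp_mul_of_mem_Icc hX hbdd)
          ((integrable_const 1).add (hint.const_mul _))
          (hbdd.mono fun ω hω => exp_mul_le_one_add_mul_of_mem_Icc hM hω)
    _ = 1 + (exp (t * M) - 1) / M * P[X] := by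
        rw [integral_add (integrable_const 1) (hint.const_mul _), integral_const_mul]
        simp
    _ ≤ exp ((exp (t * M) - 1) / M * P[X]) := by
        linarith [add_one_le_exp ((exp (t * M) - 1) / M * P[X])]

theorem measureReal_card_mul_le_sum_le_of_iIndepFun {ι : Type*} [Fintype ι] {X : ι → Ω → ℝ}
    {μ t : ℝ} (hM : 0 < M) (hindep : iIndepFun X P) (hmeas : ∀ i, AEMeasurable (X i) P)
    (hbdd : ∀ i, ∀ᵐ ω ∂P, X i ω ∈ Icc 0 M) (hmean : ∀ i, P[X i] = μ) (ht : 0 ≤ t) (a : ℝ) :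
    P.real {ω | Fintype.card ι * a ≤ ∑ i, X i ω} ≤
      exp (Fintype.card ι * ((exp (t * M) - 1) / M * μ - t * a)) := by
  have hsum_le : ∀ᵐ ω ∂P, (∑ i, X i) ω ≤ Fintype.card ι * M := by
    filter_upwards [ae_all_iff.2 hbdd] with ω hω
    calc (∑ i, X i) ω = ∑ i, X i ω := Finset.sum_apply ω _ _
      _ ≤ ∑ _i : ι, M := Finset.sum_le_sum fun i _ => (hω i).2
      _ = Fintype.card ι * M := by simp
  have hchernoff := measure_ge_le_exp_mul_mgf (Fintype.card ι * a) ht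
    (integrable_exp_mul_of_le t _ ht (Finset.aemeasurable_sum _ fun i _ => hmeas i) hsum_le)
  have hmgf : mgf (∑ i, X i) P t ≤ exp (Fintype.card ι * ((exp (t * M) - 1) / M * μ)) := by
    calc mgf (∑ i, X i) P t = ∏ i, mgf (X i) P t := hindep.mgf_sum₀ hmeas _
      _ ≤ ∏ _i : ι, exp ((exp (t * M) - 1) / M * μ) :=
        Finset.prod_le_prod (fun i _ => mgf_nonneg) fun i _ =>
          hmean i ▸ mgf_le_exp_mul_integral_of_mem_Icc hM (hmeas i) (hbdd i) t
      _ = exp (Fintype.card ι * ((exp (t * M) - 1) / M * μ)) := by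
          rw [Finset.prod_const, Finset.card_univ, exp_nat_mul]
  calc P.real {ω | Fintype.card ι * a ≤ ∑ i, X i ω}
      ≤ exp (-t * (Fintype.card ι * a)) * mgf (∑ i, X i) P t := by
        simpa only [Finset.sum_apply] using hchernoff
    _ ≤ exp (-t * (Fintype.card ι * a)) * exp (Fintype.card ι * ((exp (t * M) - 1) / M * μ)) :=
        by gcongr
    _ = exp (Fintype.card ι * ((exp (t * M) - 1) / M * μ - t * a)) := by
        rw [← exp_add]; ring_nf

end

theorem lt_one_sub_div_one_add_mul_sub_iff {μ m ν α : ℝ} (hα₀ : 0 < α) (hα₁ : α < 1) :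
    μ < (1 - α) / (1 + α) * m - α / (1 + α) * ν ↔ ((1 + α) * μ + α * ν) / (1 - α) < m := by
  have h₁ : 0 < 1 + α := by linarith
  have h₂ : 0 < 1 - α := by linarith
  rw [show (1 - α) / (1 + α) * m - α / (1 + α) * ν = ((1 - α) * m - α * ν) / (1 + α) by ring,
    lt_div_iff₀ h₁, div_lt_iff₀ h₂]
  constructor <;> intro h <;> linarith

theorem chernoff_exponent_le {M μ ν α : ℝ} (hM : 0 < M) (hμ : 0 ≤ μ) (hν : 0 ≤ ν) (hα₀ : 0 ≤ α)
    (hα₁ : α < 1) :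
    (exp α - 1) / M * μ - α / M * (((1 + α) * μ + α * ν) / (1 - α)) ≤ -(α ^ 2 * ν / M) := by
  have h₁ : 0 < 1 - α := by linarith
  have hexp : (1 - α) * exp α ≤ 1 :=
    calc (1 - α) * exp α ≤ exp (-α) * exp α :=
          mul_le_mul_of_nonneg_right (by linarith [add_one_le_exp (-α)]) (exp_pos α).le
      _ = 1 := by rw [← exp_add, neg_add_cancel, exp_zero]
  have hsplit : (exp α - 1) / M * μ - α / M * (((1 + α) * μ + α * ν) / (1 - α)) =
      -(α ^ 2 * ν / M) +
        ((1 - α) * (exp α - 1) * μ - α * (1 + α) * μ - α ^ 3 * ν) / (M * (1 - α)) := by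
    field_simp
    ring
  rw [hsplit, add_le_iff_nonpos_right]
  refine div_nonpos_of_nonpos_of_nonneg ?_ (by positivity)
  nlinarith [mul_nonneg hα₀ hμ, mul_nonneg (pow_nonneg hα₀ 3) hν,
    mul_nonneg (pow_nonneg hα₀ 2) hμ]

theorem haussler_bound_consequence_general
    {Ω : Type*} [MeasureSpace Ω] [IsProbabilityMeasure (ℙ : Measure Ω)]
    (n : ℕ) (hn : 0 < n) (M : ℝ) (hM : 0 < M)
    (Z : Fin n → Ω → ℝ)
    (hmeas : ∀ i, Measurable (Z i))
    (hbdd : ∀ i, ∀ ω, 0 ≤ Z i ω ∧ Z i ω ≤ M)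
    (hindep : iIndepFun Z ℙ)
    (μ : ℝ) (hμ : ∀ i, μ = ∫ ω, Z i ω)
    (ν α : ℝ) (hν : 0 < ν) (hα : 0 < α) (hα1 : α < 1) :
    (ℙ {ω | μ < (1 - α) / (1 + α) * ((∑ i, Z i ω) / n) - α / (1 + α) * ν}).toReal
      < 2 * Real.exp (-α ^ 2 * ν * n / M) := by
  have hμ₀ : 0 ≤ μ := hμ ⟨0, hn⟩ ▸ integral_nonneg fun ω => (hbdd _ ω).1
  set a := ((1 + α) * μ + α * ν) / (1 - α)
  have hevent : {ω | μ < (1 - α) / (1 + α) * ((∑ i, Z i ω) / n) - α / (1 + α) * ν} ⊆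
      {ω | n * a ≤ ∑ i, Z i ω} := fun ω hω => by
    have := (lt_one_sub_div_one_add_mul_sub_iff hα hα1).1 hω
    rw [lt_div_iff₀ (by exact_mod_cast hn)] at this
    exact (mul_comm a n ▸ this).le
  have hchernoff := measureReal_card_mul_le_sum_le_of_iIndepFun (t := α / M) hM hindep
    (fun i => (hmeas i).aemeasurable) (fun i => ae_of_all _ (hbdd i)) (fun i => (hμ i).symm)
    (div_nonneg hα.le hM.le) a
  rw [Fintype.card_fin, div_mul_cancel₀ α hM.ne'] at hchernoff
  calc (ℙ {ω | μ < (1 - α) / (1 + α) * ((∑ i, Z i ω) / n) - α / (1 + α) * ν}).toReal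
      ≤ exp (n * ((exp α - 1) / M * μ - α / M * a)) :=
        (measureReal_mono hevent).trans hchernoff
    _ ≤ exp (-α ^ 2 * ν * n / M) := by
        rw [exp_le_exp]
        have := mul_le_mul_of_nonneg_left (chernoff_exponent_le hM hμ₀ hν.le hα.le hα1)
          (Nat.cast_nonneg n)
        linarith [show (n : ℝ) * -(α ^ 2 * ν / M) = -α ^ 2 * ν * n / M by ring]
    _ < 2 * exp (-α ^ 2 * ν * n / M) := by linarith [exp_pos (-α ^ 2 * ν * n / M)]

/-- Consequence of Haussler's bound: for i.i.d. `Z₁,…,Zₙ` with `0 ≤ Zᵢ ≤ M`, mean `μ`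
and empirical mean `μ̂`, and any `ν > 0`, `0 < α < 1`,
`P(μ < ((1-α)/(1+α))·μ̂ - (α/(1+α))·ν) < 2·exp(-α²·ν·n/M)`. -/
theorem haussler_bound_consequence
    {Ω : Type*} [MeasureSpace Ω] [IsProbabilityMeasure (ℙ : Measure Ω)]
    (n : ℕ) (hn : 0 < n) (M : ℝ) (hM : 0 < M)
    (Z : Fin n → Ω → ℝ)
    (hmeas : ∀ i, Measurable (Z i))
    (hbdd : ∀ i, ∀ ω, 0 ≤ Z i ω ∧ Z i ω ≤ M)
    (hindep : iIndepFun Z ℙ)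
    (hident : ∀ i j, IdentDistrib (Z i) (Z j) ℙ ℙ)
    (μ : ℝ) (hμ : ∀ i, μ = ∫ ω, Z i ω)
    (ν α : ℝ) (hν : 0 < ν) (hα : 0 < α) (hα1 : α < 1) :
    (ℙ {ω | μ < (1 - α) / (1 + α) * ((∑ i, Z i ω) / n) - α / (1 + α) * ν}).toReal
      < 2 * Real.exp (-α ^ 2 * ν * n / M) :=
  haussler_bound_consequence_general n hn M hM Z hmeas hbdd hindep μ hμ ν α hν hα hα1
end

section
/- If a δ-approximate initial upper bound U₀ satisfies U₀(b) ≥ V̂*(b) - δ for all nodes b, and the corrected bound U'₀(b) = U₀(b) + δ is propagated through Bellman backup equations of the form ν̄'(b) = max{ν̲₀(b), max_a {ρ(b,a) + ∑_z ν̄'(τ(b,a,z))}}, then by induction on tree depth, ν̄(b) + γ^{Δ(b)}·(|Φ_b|/K)·δ ≥ ν̄'(b) ≥ ν*(b) for every node b, where ν̄ is the bound computed from U₀. -/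
/-!
Both inequalities are comparison principles for the Bellman backup on a tree of finite height.
The backup is monotone and shifts by at most `C ≥ 0` when every action's child sum shifts by at
most `C`, so a slack `s` at the children passes to the parent as soon as the children's slacks
sum to at most the parent's. The slack `γ^Δ · w · δ` has this property because the reach
fractions of the children sum to the parent's and `γ ≤ 1`; the lower bound `ν* ≤ ν̄'` is the case
of zero slack.
-/

open Finset

theorem max_le_max_add_of_le_add {α : Type*} [AddCommMonoid α] [LinearOrder α]
    [IsOrderedAddMonoid α] {a b c C : α} (hC : 0 ≤ C) (h : a ≤ b + C) :
    max c a ≤ max c b + C :=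
  max_le (le_add_of_le_of_nonneg (le_max_left _ _) hC)
    (h.trans (by gcongr; exact le_max_right _ _))

section TreeBackup

variable {B A Z : Type*} (child : B → A → Z → B) (Zb : B → A → Finset Z)

theorem induction_on_children (ht : B → ℕ)
    (hht : ∀ b a z, z ∈ Zb b a → ht (child b a z) < ht b) {P : B → Prop}
    (step : ∀ b, (∀ a, ∀ z ∈ Zb b a, P (child b a z)) → P b) (b : B) : P b := by
  induction b using (measure ht).wf.induction with
  | h b ih => exact step b fun a z hz => ih _ (hht b a z hz)

variable [Fintype A] [Nonempty A]

def backup (ν₀ : B → ℝ) (ρ : B → A → ℝ) (v : B → ℝ) (b : B) : ℝ :=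
  max (ν₀ b) (univ.sup' univ_nonempty fun a => ρ b a + ∑ z ∈ Zb b a, v (child b a z))

variable {child Zb}

theorem backup_le_backup_add {ν₀ : B → ℝ} {ρ : B → A → ℝ} {u v s : B → ℝ} {b : B}
    (hs : 0 ≤ s b) (hsum : ∀ a, ∑ z ∈ Zb b a, s (child b a z) ≤ s b)
    (huv : ∀ a, ∀ z ∈ Zb b a, u (child b a z) ≤ v (child b a z) + s (child b a z)) :
    backup child Zb ν₀ ρ u b ≤ backup child Zb ν₀ ρ v b + s b := by
  refine max_le_max_add_of_le_add hs ?_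
  rw [sup'_add]
  refine sup'_mono_fun fun a _ => ?_
  calc ρ b a + ∑ z ∈ Zb b a, u (child b a z)
      ≤ ρ b a + ∑ z ∈ Zb b a, (v (child b a z) + s (child b a z)) := by
        gcongr with z hz; exact huv a z hz
    _ ≤ ρ b a + ∑ z ∈ Zb b a, v (child b a z) + s b := by
        rw [sum_add_distrib, ← add_assoc]; gcongr; exact hsum a

variable (ht : B → ℕ) {leaf : B → Prop} {ν₀ : B → ℝ} {ρ : B → A → ℝ} {u v : B → ℝ}

theorem le_add_of_backup (hht : ∀ b a z, z ∈ Zb b a → ht (child b a z) < ht b)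
    {s : B → ℝ} (hs : ∀ b, ¬ leaf b → 0 ≤ s b)
    (hsum : ∀ b, ¬ leaf b → ∀ a, ∑ z ∈ Zb b a, s (child b a z) ≤ s b)
    (hleaf : ∀ b, leaf b → u b ≤ v b + s b)
    (hu : ∀ b, ¬ leaf b → u b ≤ backup child Zb ν₀ ρ u b)
    (hv : ∀ b, ¬ leaf b → v b = backup child Zb ν₀ ρ v b) (b : B) :
    u b ≤ v b + s b := by
  induction b using induction_on_children child Zb ht hht with
  | step b ih =>
    by_cases hb : leaf b
    · exact hleaf b hb
    · rw [hv b hb]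
      exact (hu b hb).trans (backup_le_backup_add (hs b hb) (hsum b hb) ih)

theorem le_of_backup (hht : ∀ b a z, z ∈ Zb b a → ht (child b a z) < ht b)
    (hleaf : ∀ b, leaf b → u b ≤ v b)
    (hu : ∀ b, ¬ leaf b → u b ≤ backup child Zb ν₀ ρ u b)
    (hv : ∀ b, ¬ leaf b → v b = backup child Zb ν₀ ρ v b) (b : B) : u b ≤ v b := by
  simpa using le_add_of_backup ht hht (s := 0) (fun _ _ => le_rfl) (by simp)
    (by simpa using hleaf) hu hv b

end TreeBackup

/-- If the `δ`-approximate initial upper bound `U₀(b) ≥ V̂*(b) - δ` is corrected to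
`U'₀(b) = U₀(b) + δ` and propagated through the Bellman backup equations, then by
induction on tree depth `ν̄(b) + γ^{Δ(b)}·(|Φ_b|/K)·δ ≥ ν̄'(b) ≥ ν*(b)` for every node
`b`, where `ν̄` is the bound computed from `U₀`. -/
theorem corrected_upper_bound_dominates
    {B A Z : Type*} [Fintype A] [Nonempty A]
    (child : B → A → Z → B)           -- the child node τ(b,a,z)
    (Zb : B → A → Finset Z)           -- observation branches present under action a
    (leaf : B → Prop)
    (ht : B → ℕ)                      -- height, for induction on tree depth
    (hht : ∀ b a z, z ∈ Zb b a → ht (child b a z) < ht b)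
    (Δ : B → ℕ) (w : B → ℝ) (γ lam δ : ℝ)
    (U₀ Vhatstar νlo₀ νstar νup νup' : B → ℝ) (ρ : B → A → ℝ)
    (hγ : 0 ≤ γ) (hγ1 : γ < 1) (hδ : 0 ≤ δ) (hw : ∀ b, 0 ≤ w b)
    (hΔ : ∀ b a z, z ∈ Zb b a → Δ (child b a z) = Δ b + 1)
    (hwsum : ∀ b a, ¬ leaf b → ∑ z ∈ Zb b a, w (child b a z) = w b)
    -- U₀ is δ-approximate
    (hU₀ : ∀ b, Vhatstar b - δ ≤ U₀ b)
    -- leaf initialization of ν̄ from U₀ and of ν̄' from U'₀ = U₀ + δ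
    (hleaf : ∀ b, leaf b →
      νup b = max (νlo₀ b) (w b * γ ^ (Δ b) * U₀ b - lam))
    (hleaf' : ∀ b, leaf b →
      νup' b = max (νlo₀ b) (w b * γ ^ (Δ b) * (U₀ b + δ) - lam))
    -- Bellman backup at internal nodes, for both ν̄ and ν̄'
    (hbackup : ∀ b, ¬ leaf b →
      νup b = max (νlo₀ b)
        (Finset.univ.sup' Finset.univ_nonempty
          (fun a => ρ b a + ∑ z ∈ Zb b a, νup (child b a z))))
    (hbackup' : ∀ b, ¬ leaf b →
      νup' b = max (νlo₀ b)
        (Finset.univ.sup' Finset.univ_nonempty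
          (fun a => ρ b a + ∑ z ∈ Zb b a, νup' (child b a z))))
    -- the optimal RWDU satisfies the Bellman inequalities with the exact value V̂*
    (hstar_leaf : ∀ b, leaf b →
      νstar b ≤ max (νlo₀ b) (w b * γ ^ (Δ b) * Vhatstar b - lam))
    (hstar : ∀ b, ¬ leaf b →
      νstar b ≤ max (νlo₀ b)
        (Finset.univ.sup' Finset.univ_nonempty
          (fun a => ρ b a + ∑ z ∈ Zb b a, νstar (child b a z)))) :
    ∀ b, νup' b ≤ νup b + γ ^ (Δ b) * w b * δ ∧ νstar b ≤ νup' b := by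
  have hslack_nonneg : ∀ b, 0 ≤ γ ^ Δ b * w b * δ := fun b =>
    mul_nonneg (mul_nonneg (pow_nonneg hγ _) (hw b)) hδ
  have hslack : ∀ b, ¬ leaf b → ∀ a,
      ∑ z ∈ Zb b a, γ ^ Δ (child b a z) * w (child b a z) * δ ≤ γ ^ Δ b * w b * δ := by
    intro b hb a
    calc ∑ z ∈ Zb b a, γ ^ Δ (child b a z) * w (child b a z) * δ
        = γ ^ (Δ b + 1) * (∑ z ∈ Zb b a, w (child b a z)) * δ := by
          rw [mul_sum, sum_mul]
          exact sum_congr rfl fun z hz => by rw [hΔ b a z hz]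
      _ = γ * (γ ^ Δ b * w b * δ) := by rw [hwsum b a hb]; ring
      _ ≤ γ ^ Δ b * w b * δ := mul_le_of_le_one_left (hslack_nonneg b) hγ1.le
  intro b
  refine ⟨le_add_of_backup ht hht (fun b _ => hslack_nonneg b) hslack (fun b hb => ?_)
      (fun b hb => (hbackup' b hb).le) hbackup b,
    le_of_backup ht hht (fun b hb => ?_) hstar hbackup' b⟩
  · rw [hleaf' b hb, hleaf b hb]
    exact max_le_max_add_of_le_add (hslack_nonneg b) (le_of_eq (by ring))
  · rw [hleaf' b hb]
    refine (hstar_leaf b hb).trans (max_le_max le_rfl (sub_le_sub_right ?_ lam))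
    exact mul_le_mul_of_nonneg_left (by linarith [hU₀ b]) (mul_nonneg (hw b) (pow_nonneg hγ _))
end

section
/- A DESPOT of height D constructed from K sampled scenarios, where each node has at most |A| action branches and under each action the K scenarios are partitioned among the resulting observation branches, has at most O(|A|^D · K) belief nodes; precisely, the number of nodes at depth d is at most |A|^d · K, so the total number of nodes is at most K·(|A|^{D+1}-1)/(|A|-1) for |A| ≥ 2. -/
theorem le_pow_mul_of_le_mul_succ {R : Type*} [Semiring R] [PartialOrder R] [IsOrderedRing R]
    {u : ℕ → R} {c : R} (hc : 0 ≤ c) (h : ∀ k, u (k + 1) ≤ c * u k) (n : ℕ) :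
    u n ≤ c ^ n * u 0 := by
  induction n with
  | zero => simp
  | succ n ih =>
    calc u (n + 1) ≤ c * u n := h n
      _ ≤ c * (c ^ n * u 0) := mul_le_mul_of_nonneg_left ih hc
      _ = c ^ (n + 1) * u 0 := by rw [pow_succ', mul_assoc]

theorem despot_size_bound_general
    (A K D : ℕ) (hA : 2 ≤ A)
    (N S : ℕ → ℕ)                 -- node count and total scenario count at each depth
    (hS0 : S 0 = K)
    (hNS : ∀ d, N d ≤ S d)
    (hSrec : ∀ d, S (d + 1) ≤ A * S d) :
    (∀ d, d ≤ D → N d ≤ A ^ d * K) ∧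
    (∑ d ∈ Finset.range (D + 1), N d) ≤ K * ((A ^ (D + 1) - 1) / (A - 1)) := by
  have hN : ∀ d, N d ≤ A ^ d * K := fun d =>
    (hNS d).trans (hS0 ▸ le_pow_mul_of_le_mul_succ (Nat.zero_le A) hSrec d)
  refine ⟨fun d _ => hN d, ?_⟩
  calc ∑ d ∈ Finset.range (D + 1), N d
      ≤ ∑ d ∈ Finset.range (D + 1), A ^ d * K := Finset.sum_le_sum fun d _ => hN d
    _ = K * ∑ d ∈ Finset.range (D + 1), A ^ d := by rw [← Finset.sum_mul, mul_comm]
    _ = K * ((A ^ (D + 1) - 1) / (A - 1)) := by rw [Nat.geomSum_eq hA]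

/-- Size of a DESPOT: if the root holds `K` scenarios (`S 0 = K`, `N 0 = 1`), every
node holds at least one scenario (`N d ≤ S d`), and under each of the `|A| ≥ 2` action
branches the scenarios of a node are partitioned among its observation children
(`S (d+1) ≤ |A| * S d`), then the number of nodes at depth `d` is at most `|A|^d·K`
and the total number of nodes up to depth `D` is at most `K·(|A|^{D+1}-1)/(|A|-1)`. -/
theorem despot_size_bound
    (A K D : ℕ) (hA : 2 ≤ A) (hK : 1 ≤ K)
    (N S : ℕ → ℕ)                 -- node count and total scenario count at each depth
    (hS0 : S 0 = K) (hN0 : N 0 = 1)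
    (hNS : ∀ d, N d ≤ S d)
    (hSrec : ∀ d, S (d + 1) ≤ A * S d) :
    (∀ d, d ≤ D → N d ≤ A ^ d * K) ∧
    (∑ d ∈ Finset.range (D + 1), N d) ≤ K * ((A ^ (D + 1) - 1) / (A - 1)) :=
  despot_size_bound_general A K D hA N S hS0 hNS hSrec
end
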